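/- Let G be a topological group and let φ: L → K be a proximally irreducible extension of affine G-flows. Then φ maps cl(ext(L)) onto cl(ext(K)), and the restriction of φ to cl(ext(L)) is a G-irreducible extension of G-flows from cl(ext(L)) onto cl(ext(K)). -/

import Mathlib

universe u v w x

/-- An affine `G`-flow: a nonempty compact convex subset of a Hausdorff locally convex
real topological vector space, equipped with a continuous action of `G` by affine
homeomorphisms.  The action is recorded as a function `smul : G → E → E` on the ambient
space whose behaviour is only constrained on `carrier`. -/
structure AffineFlow (G : Type u) [Group G] [TopologicalSpace G] [IsTopologicalGroup G] where
  /-- the ambient locally convex topological real vector space -/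
  E : Type v
  [instAddCommGroup : AddCommGroup E]
  [instModule : Module ℝ E]
  [instTopologicalSpace : TopologicalSpace E]
  [instT2Space : T2Space E]
  [instTopologicalAddGroup : IsTopologicalAddGroup E]
  [instContinuousSMul : ContinuousSMul ℝ E]
  [instLocallyConvexSpace : LocallyConvexSpace ℝ E]
  /-- the compact convex set itself -/
  carrier : Set E
  nonempty' : carrier.Nonempty
  isCompact' : IsCompact carrier
  convex' : Convex ℝ carrier
  /-- the action of `G` -/
  smul : G → E → E
  smul_mem' : ∀ g : G, ∀ x ∈ carrier, smul g x ∈ carrier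
  one_smul' : ∀ x ∈ carrier, smul 1 x = x
  mul_smul' : ∀ g h : G, ∀ x ∈ carrier, smul (g * h) x = smul g (smul h x)
  continuousOn_smul' : ContinuousOn (fun p : G × E => smul p.1 p.2) (Set.univ ×ˢ carrier)
  smul_affine' : ∀ g : G, ∀ x ∈ carrier, ∀ y ∈ carrier, ∀ t : ℝ, 0 ≤ t → t ≤ 1 →
    smul g (t • x + (1 - t) • y) = t • smul g x + (1 - t) • smul g y

attribute [instance] AffineFlow.instAddCommGroup AffineFlow.instModule
  AffineFlow.instTopologicalSpace AffineFlow.instT2Space AffineFlow.instTopologicalAddGroup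
  AffineFlow.instContinuousSMul AffineFlow.instLocallyConvexSpace

/-- An affine `G`-map between affine `G`-flows: a continuous affine `G`-equivariant map
(recorded on the ambient spaces, with all conditions on the carriers). -/
def IsAffineGMap {G : Type u} [Group G] [TopologicalSpace G] [IsTopologicalGroup G]
    (K : AffineFlow.{u, v} G) (L : AffineFlow.{u, w} G) (f : K.E → L.E) : Prop :=
  Set.MapsTo f K.carrier L.carrier ∧ ContinuousOn f K.carrier ∧
    (∀ g : G, ∀ x ∈ K.carrier, f (K.smul g x) = L.smul g (f x)) ∧
    ∀ x ∈ K.carrier, ∀ y ∈ K.carrier, ∀ t : ℝ, 0 ≤ t → t ≤ 1 →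
      f (t • x + (1 - t) • y) = t • f x + (1 - t) • f y

/-- An affine extension: a surjective affine `G`-map. -/
def IsAffineExtension {G : Type u} [Group G] [TopologicalSpace G] [IsTopologicalGroup G]
    (K : AffineFlow.{u, v} G) (L : AffineFlow.{u, w} G) (f : K.E → L.E) : Prop :=
  IsAffineGMap K L f ∧ f '' K.carrier = L.carrier

/-- An affine subflow: a nonempty closed convex `G`-invariant subset. -/
def AffineFlow.IsAffineSubflow {G : Type u} [Group G] [TopologicalSpace G] [IsTopologicalGroup G]
    (K : AffineFlow.{u, v} G) (C : Set K.E) : Prop :=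
  C.Nonempty ∧ C ⊆ K.carrier ∧ IsClosed C ∧ Convex ℝ C ∧ ∀ g : G, ∀ x ∈ C, K.smul g x ∈ C

/-- An affine extension `f : K → L` is affine `G`-irreducible if no proper affine subflow
of `K` maps onto `L`. -/
def IsAffineIrreducibleExt {G : Type u} [Group G] [TopologicalSpace G] [IsTopologicalGroup G]
    (K : AffineFlow.{u, v} G) (L : AffineFlow.{u, w} G) (f : K.E → L.E) : Prop :=
  IsAffineExtension K L f ∧
    ∀ C : Set K.E, K.IsAffineSubflow C → C ≠ K.carrier → f '' C ≠ L.carrier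

/-- An affine extension `f : K → L` is proximally irreducible if the only affine subflow
`C` of `K` meeting `conv (cl (ext K) ∩ f ⁻¹' {y})` for every `y ∈ cl (ext L)` is `K` itself. -/
def IsProximallyIrreducibleExt {G : Type u} [Group G] [TopologicalSpace G] [IsTopologicalGroup G]
    (K : AffineFlow.{u, v} G) (L : AffineFlow.{u, w} G) (f : K.E → L.E) : Prop :=
  IsAffineExtension K L f ∧
    ∀ C : Set K.E, K.IsAffineSubflow C →
      (∀ y ∈ closure (L.carrier.extremePoints ℝ),
        (C ∩ convexHull ℝ (closure (K.carrier.extremePoints ℝ) ∩ f ⁻¹' {y})).Nonempty) →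
      C = K.carrier

/-- An affine `G`-flow `K` is affine `G`-projective if for all affine `G`-flows `L`, `P`,
every affine `G`-map `φ : K → L` and every affine extension `π : P → L`, there is an
affine `G`-map `ψ : K → P` with `π ∘ ψ = φ` (on the carrier of `K`). -/
def IsAffineGProjective {G : Type u} [Group G] [TopologicalSpace G] [IsTopologicalGroup G]
    (K : AffineFlow.{u, v} G) : Prop :=
  ∀ (L : AffineFlow.{u, w} G) (P : AffineFlow.{u, x} G) (φ : K.E → L.E) (π : P.E → L.E),
    IsAffineGMap K L φ → IsAffineExtension P L π →
    ∃ ψ : K.E → P.E, IsAffineGMap K P ψ ∧ ∀ y ∈ K.carrier, π (ψ y) = φ y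

/-!
Write `X = cl (ext L)` and `Y = cl (ext K)`. Every extreme point of `K` lifts to an extreme point
of `L`, namely an extreme point of its fibre, which is a face of `L`; hence `Y ⊆ f X`.
Conversely, let `C ⊆ L` be closed and `G`-invariant and meet `X ∩ f⁻¹ y` for every `y ∈ Y`.
Then `cl (conv C)` is an affine subflow meeting every `conv (X ∩ f⁻¹ y)`, so it is all of `L` by
proximal irreducibility, and Milman's converse to the Krein–Milman theorem gives `ext L ⊆ C`,
i.e. `X ⊆ C`. Taking `C = X ∩ f⁻¹ Y` yields `f X ⊆ Y`; taking for `C` a subflow of `X` with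
`f C = Y` yields `C = X`.
-/

open Set Topology

section Convexity

variable {E F : Type*} [AddCommGroup E] [Module ℝ E] [AddCommGroup F] [Module ℝ F]

def AffineOn (s : Set E) (f : E → F) : Prop :=
  ∀ x ∈ s, ∀ y ∈ s, ∀ t : ℝ, 0 ≤ t → t ≤ 1 → f (t • x + (1 - t) • y) = t • f x + (1 - t) • f y

namespace AffineOn

variable {s : Set E} {f : E → F}

lemma map_mem_openSegment (hf : AffineOn s f) {x y z : E} (hx : x ∈ s) (hy : y ∈ s)
    (hz : z ∈ openSegment ℝ x y) : f z ∈ openSegment ℝ (f x) (f y) := by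
  obtain ⟨a, b, ha, hb, hab, rfl⟩ := hz
  obtain rfl : b = 1 - a := by linarith
  exact ⟨a, 1 - a, ha, hb, hab, (hf x hx y hy a ha.le (by linarith)).symm⟩

lemma isExtreme_inter_preimage (hf : AffineOn s f) {t u : Set F} (hst : MapsTo f s t)
    (hu : IsExtreme ℝ t u) : IsExtreme ℝ s (s ∩ f ⁻¹' u) :=
  ⟨inter_subset_left, fun _ hx _ hy _ hz hzxy =>
    ⟨hx, hu.left_mem_of_mem_openSegment (hst hx) (hst hy) hz.2 (hf.map_mem_openSegment hx hy hzxy)⟩⟩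

lemma image_convexHull_subset (hf : AffineOn s f) (hs : Convex ℝ s) {A : Set E} (hA : A ⊆ s) :
    f '' convexHull ℝ A ⊆ convexHull ℝ (f '' A) := by
  let T : Set E := {z | z ∈ convexHull ℝ A ∧ f z ∈ convexHull ℝ (f '' A)}
  have hT : Convex ℝ T := by
    rintro p ⟨hp, hfp⟩ q ⟨hq, hfq⟩ a b ha hb hab
    obtain rfl : b = 1 - a := by linarith
    refine ⟨convex_convexHull ℝ A hp hq ha hb hab, ?_⟩
    rw [hf p (convexHull_min hA hs hp) q (convexHull_min hA hs hq) a ha (by linarith)]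
    exact convex_convexHull ℝ _ hfp hfq ha hb hab
  have hAT : A ⊆ T := fun z hz =>
    ⟨subset_convexHull ℝ A hz, subset_convexHull ℝ _ (mem_image_of_mem f hz)⟩
  rintro _ ⟨z, hz, rfl⟩
  exact (convexHull_min hAT hT hz).2

end AffineOn

end Convexity

section ExtremePoints

variable {E : Type*} [AddCommGroup E] [Module ℝ E] [TopologicalSpace E] [ContinuousSMul ℝ E]

lemma IsCompact.convexJoin [ContinuousAdd E] {s t : Set E} (hs : IsCompact s) (ht : IsCompact t) :
    IsCompact (_root_.convexJoin ℝ s t) := by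
  have h : _root_.convexJoin ℝ s t =
      (fun p : ℝ × E × E => (1 - p.1) • p.2.1 + p.1 • p.2.2) '' (Icc 0 1 ×ˢ s ×ˢ t) := by
    ext z
    simp only [mem_convexJoin, segment_eq_image, mem_image, mem_prod, Prod.exists]
    constructor
    · rintro ⟨a, ha, b, hb, θ, hθ, rfl⟩
      exact ⟨θ, a, b, ⟨hθ, ha, hb⟩, rfl⟩
    · rintro ⟨θ, a, b, ⟨hθ, ha, hb⟩, rfl⟩
      exact ⟨a, ha, b, hb, θ, hθ, rfl⟩
  rw [h]
  exact (isCompact_Icc.prod (hs.prod ht)).image (by fun_prop)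

lemma isCompact_convexHull_biUnion [ContinuousAdd E] {ι : Type*} (F : Finset ι)
    {K : ι → Set E} (hc : ∀ i ∈ F, IsCompact (K i)) (hv : ∀ i ∈ F, Convex ℝ (K i)) :
    IsCompact (convexHull ℝ (⋃ i ∈ F, K i)) := by
  classical
  induction F using Finset.induction_on with
  | empty => simp
  | insert a F _ ih =>
    rw [Finset.set_biUnion_insert]
    have hT := ih (fun i hi => hc i (Finset.mem_insert_of_mem hi))
      (fun i hi => hv i (Finset.mem_insert_of_mem hi))
    have hKa := hc a (Finset.mem_insert_self a F)
    have hKa' := hv a (Finset.mem_insert_self a F)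
    rcases (K a).eq_empty_or_nonempty with hae | han
    · rwa [hae, empty_union]
    rcases (⋃ i ∈ F, K i).eq_empty_or_nonempty with hTe | hTn
    · rwa [hTe, union_empty, hKa'.convexHull_eq]
    rw [convexHull_union han hTn, hKa'.convexHull_eq]
    exact hKa.convexJoin hT

variable [IsTopologicalAddGroup E] [T2Space E] [LocallyConvexSpace ℝ E]

theorem extremePoints_closure_convexHull_subset {S : Set E} (hS : IsCompact S)
    (hs : IsCompact (closure (convexHull ℝ S))) :
    (closure (convexHull ℝ S)).extremePoints ℝ ⊆ closure S := by
  intro x hx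
  rw [mem_closure_iff_nhds]
  intro U hU
  obtain ⟨V, ⟨hV0, hVconv⟩, hVclosed, hVU⟩ : ∃ V : Set E, (V ∈ 𝓝 0 ∧ Convex ℝ V) ∧
      IsClosed V ∧ V ⊆ (x - ·) ⁻¹' U := by
    have hU' : (x - ·) ⁻¹' U ∈ 𝓝 (0 : E) :=
      (continuous_const.sub continuous_id).continuousAt.preimage_mem_nhds (by simpa using hU)
    obtain ⟨W, ⟨hW, hWclosed⟩, hWU⟩ := closed_nhds_basis (0 : E) |>.mem_iff.1 hU'
    obtain ⟨V, hV, hVW⟩ := (LocallyConvexSpace.convex_basis_zero ℝ E).mem_iff.1 hW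
    exact ⟨closure V, ⟨Filter.mem_of_superset hV.1 subset_closure, hV.2.closure⟩, isClosed_closure,
      (closure_minimal hVW hWclosed).trans hWU⟩
  obtain ⟨b, hbS, hbfin, hbcov⟩ :=
    hS.elim_finite_subcover_image (c := fun t => (t + ·) '' interior V)
    (fun t _ => (Homeomorph.addLeft t).isOpenMap _ isOpen_interior)
    (fun u hu => mem_biUnion hu ⟨0, mem_interior_iff_mem_nhds.2 hV0, add_zero u⟩)
  -- `x`, being extreme, lies in one of the finitely many compact convex pieces `K t ⊆ t + V`
  let K : E → Set E := fun t => closure (convexHull ℝ (S ∩ (t + ·) '' V))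
  have hKs : ∀ t, K t ⊆ closure (convexHull ℝ S) :=
    fun t => closure_mono (convexHull_mono inter_subset_left)
  have hKV : ∀ t, K t ⊆ (t + ·) '' V := fun t => closure_minimal
    (convexHull_min inter_subset_right (hVconv.translate t))
    ((Homeomorph.addLeft t).isClosedMap _ hVclosed)
  have hsub : closure (convexHull ℝ S) ⊆ convexHull ℝ (⋃ t ∈ hbfin.toFinset, K t) := by
    refine closure_minimal (convexHull_min (fun u hu => ?_) (convex_convexHull ℝ _))
      (isCompact_convexHull_biUnion _ (fun t _ => hs.of_isClosed_subset isClosed_closure (hKs t))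
        (fun t _ => (convex_convexHull ℝ _).closure)).isClosed
    obtain ⟨t, htb, hut⟩ := mem_iUnion₂.1 (hbcov hu)
    exact subset_convexHull ℝ _ (mem_biUnion (hbfin.mem_toFinset.2 htb)
      (subset_closure (subset_convexHull ℝ _ ⟨hu, image_mono interior_subset hut⟩)))
  have hx' : x ∈ ⋃ t ∈ hbfin.toFinset, K t := extremePoints_convexHull_subset
    (inter_extremePoints_subset_extremePoints_of_subset (convexHull_min
      (iUnion₂_subset fun t _ => hKs t) (convex_convexHull ℝ S).closure) ⟨hsub hx.1, hx⟩)
  obtain ⟨t, htb, hxt⟩ := mem_iUnion₂.1 hx'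
  obtain ⟨v, hv, rfl⟩ := hKV t hxt
  exact ⟨t, by simpa using hVU hv, hbS (hbfin.mem_toFinset.1 htb)⟩

lemma AffineOn.exists_mem_extremePoints_map_eq {F : Type*} [AddCommGroup F] [Module ℝ F]
    [TopologicalSpace F] [T1Space F] {s : Set E} {t : Set F} {f : E → F} (hf : AffineOn s f)
    (hs : IsCompact s) (hfc : ContinuousOn f s) (hst : MapsTo f s t) {y : F}
    (hy : y ∈ t.extremePoints ℝ) (hys : y ∈ f '' s) : ∃ x ∈ s.extremePoints ℝ, f x = y := by
  have hfiber : IsExtreme ℝ s (s ∩ f ⁻¹' {y}) :=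
    hf.isExtreme_inter_preimage hst (isExtreme_singleton.2 hy)
  obtain ⟨x, hx⟩ := (hs.of_isClosed_subset (hfc.preimage_isClosed_of_isClosed hs.isClosed
    isClosed_singleton) inter_subset_left).extremePoints_nonempty
    (by obtain ⟨x₀, hx₀, hfx₀⟩ := hys; exact ⟨x₀, hx₀, hfx₀⟩)
  exact ⟨x, hfiber.extremePoints_subset_extremePoints hx, hx.1.2⟩

end ExtremePoints

section Flows

variable {G : Type u} [Group G] [TopologicalSpace G] [IsTopologicalGroup G]

namespace AffineFlow

lemma continuousOn_smul (L : AffineFlow.{u, v} G) (g : G) : ContinuousOn (L.smul g) L.carrier :=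
  L.continuousOn_smul'.comp (continuous_const.prodMk continuous_id).continuousOn
    fun _ hx => ⟨mem_univ g, hx⟩

lemma affineOn_smul (L : AffineFlow.{u, v} G) (g : G) : AffineOn L.carrier (L.smul g) :=
  L.smul_affine' g

lemma smul_mem_extremePoints (L : AffineFlow.{u, v} G) (g : G) {x : L.E}
    (hx : x ∈ L.carrier.extremePoints ℝ) : L.smul g x ∈ L.carrier.extremePoints ℝ := by
  have hgx : L.smul g x ∈ L.carrier := L.smul_mem' g x hx.1
  -- `{g x}` is the preimage of the extreme set `{x}` under the affine map `g⁻¹`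
  have h : L.carrier ∩ L.smul g⁻¹ ⁻¹' {x} = {L.smul g x} := by
    ext z
    refine ⟨fun ⟨hz, hzx⟩ => ?_, ?_⟩
    · rw [mem_singleton_iff, ← hzx, ← L.mul_smul' _ _ z hz, mul_inv_cancel, L.one_smul' z hz]
    · rintro rfl
      rw [mem_inter_iff, mem_preimage, ← L.mul_smul' _ _ x hx.1, inv_mul_cancel,
        L.one_smul' x hx.1]
      exact ⟨hgx, rfl⟩
  rw [← isExtreme_singleton, ← h]
  exact (L.affineOn_smul g⁻¹).isExtreme_inter_preimage (L.smul_mem' g⁻¹)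
    (isExtreme_singleton.2 hx)

lemma closure_extremePoints_subset (L : AffineFlow.{u, v} G) :
    closure (L.carrier.extremePoints ℝ) ⊆ L.carrier :=
  closure_minimal extremePoints_subset L.isCompact'.isClosed

lemma smul_mem_closure_extremePoints (L : AffineFlow.{u, v} G) (g : G) :
    MapsTo (L.smul g) (closure (L.carrier.extremePoints ℝ))
      (closure (L.carrier.extremePoints ℝ)) :=
  MapsTo.closure_of_continuousOn (fun _ => L.smul_mem_extremePoints g)
    ((L.continuousOn_smul g).mono L.closure_extremePoints_subset)

lemma isAffineSubflow_closure_convexHull (L : AffineFlow.{u, v} G) {C : Set L.E}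
    (hC : C.Nonempty) (hCL : C ⊆ L.carrier) (hCinv : ∀ g : G, MapsTo (L.smul g) C C) :
    L.IsAffineSubflow (closure (convexHull ℝ C)) := by
  have hconv : convexHull ℝ C ⊆ L.carrier := convexHull_min hCL L.convex'
  have hD : closure (convexHull ℝ C) ⊆ L.carrier := closure_minimal hconv L.isCompact'.isClosed
  refine ⟨hC.mono ((subset_convexHull ℝ C).trans subset_closure), hD, isClosed_closure,
    (convex_convexHull ℝ C).closure, fun g => MapsTo.closure_of_continuousOn ?_ ?_⟩
  · exact fun z hz => convexHull_mono (image_subset_iff.2 (hCinv g))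
      ((L.affineOn_smul g).image_convexHull_subset L.convex' hCL (mem_image_of_mem _ hz))
  · exact (L.continuousOn_smul g).mono hD

lemma closure_extremePoints_nonempty (L : AffineFlow.{u, v} G) :
    (closure (L.carrier.extremePoints ℝ)).Nonempty :=
  (L.isCompact'.extremePoints_nonempty L.nonempty').closure

end AffineFlow

lemma IsProximallyIrreducibleExt.closure_extremePoints_subset {L : AffineFlow.{u, v} G}
    {K : AffineFlow.{u, w} G} {f : L.E → K.E} (hf : IsProximallyIrreducibleExt L K f)
    {C : Set L.E} (hCcl : IsClosed C) (hCL : C ⊆ L.carrier)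
    (hCinv : ∀ g : G, MapsTo (L.smul g) C C)
    (hCf : ∀ y ∈ closure (K.carrier.extremePoints ℝ),
      ∃ x ∈ C, x ∈ closure (L.carrier.extremePoints ℝ) ∧ f x = y) :
    closure (L.carrier.extremePoints ℝ) ⊆ C := by
  have hCne : C.Nonempty :=
    let ⟨y, hy⟩ := K.closure_extremePoints_nonempty
    let ⟨x, hxC, _⟩ := hCf y hy
    ⟨x, hxC⟩
  have hD : closure (convexHull ℝ C) = L.carrier := by
    refine hf.2 _ (L.isAffineSubflow_closure_convexHull hCne hCL hCinv) fun y hy => ?_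
    obtain ⟨x, hxC, hxL, rfl⟩ := hCf y hy
    exact ⟨x, subset_closure (subset_convexHull ℝ C hxC), subset_convexHull ℝ _ ⟨hxL, rfl⟩⟩
  have hext := extremePoints_closure_convexHull_subset
    (L.isCompact'.of_isClosed_subset hCcl hCL) (hD ▸ L.isCompact')
  rw [hD, hCcl.closure_eq] at hext
  exact closure_minimal hext hCcl

end Flows

/-- **Statement 11.** A proximally irreducible extension restricts to a `G`-irreducible
extension between the closures of the sets of extreme points. -/
theorem statement11 {G : Type u} [Group G] [TopologicalSpace G] [IsTopologicalGroup G]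
    (L : AffineFlow.{u, v} G) (K : AffineFlow.{u, w} G) (f : L.E → K.E)
    (hf : IsProximallyIrreducibleExt L K f) :
    f '' closure (L.carrier.extremePoints ℝ) = closure (K.carrier.extremePoints ℝ) ∧
      ∀ C : Set L.E, C.Nonempty → IsClosed C → C ⊆ closure (L.carrier.extremePoints ℝ) →
        (∀ g : G, ∀ x ∈ C, L.smul g x ∈ C) →
        C ≠ closure (L.carrier.extremePoints ℝ) →
        f '' C ≠ closure (K.carrier.extremePoints ℝ) := by
  obtain ⟨⟨hfK, hfc, hfG, hfa⟩, hfL⟩ := hf.1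
  set X := closure (L.carrier.extremePoints ℝ)
  set Y := closure (K.carrier.extremePoints ℝ)
  have hXc : ContinuousOn f X := hfc.mono L.closure_extremePoints_subset
  have hYX : Y ⊆ f '' X := by
    refine closure_minimal (fun y hy => ?_) ((L.isCompact'.of_isClosed_subset isClosed_closure
      L.closure_extremePoints_subset).image_of_continuousOn hXc).isClosed
    obtain ⟨x, hx, hfx⟩ :=
      AffineOn.exists_mem_extremePoints_map_eq hfa L.isCompact' hfc hfK hy (hfL ▸ hy.1)
    exact ⟨x, subset_closure hx, hfx⟩
  have hXY : X ⊆ X ∩ f ⁻¹' Y := by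
    refine hf.closure_extremePoints_subset (hXc.preimage_isClosed_of_isClosed isClosed_closure
      isClosed_closure) (inter_subset_left.trans L.closure_extremePoints_subset)
      (fun g x ⟨hxX, hxY⟩ => ⟨L.smul_mem_closure_extremePoints g hxX, ?_⟩) fun y hy => ?_
    · rw [mem_preimage, hfG g x (L.closure_extremePoints_subset hxX)]
      exact K.smul_mem_closure_extremePoints g hxY
    · obtain ⟨x, hx, rfl⟩ := hYX hy
      exact ⟨x, ⟨hx, hy⟩, hx, rfl⟩
  refine ⟨(image_subset_iff.2 fun x hx => (hXY hx).2).antisymm hYX, ?_⟩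
  intro C _ hCcl hCX hCinv hCX' hfC
  refine hCX' (hCX.antisymm (hf.closure_extremePoints_subset hCcl
    (hCX.trans L.closure_extremePoints_subset) (fun g x hx => hCinv g x hx) fun y hy => ?_))
  obtain ⟨x, hx, rfl⟩ := hfC.symm.subset hy
  exact ⟨x, hx, hCX hx, rfl⟩
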